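/- arXiv:math-ph/0208026 — 4 statements merged into one kernel-verified Lean document; each statement's English description precedes it below -/
import Mathlib

section
/- Let $X_1,\dots,X_n$ be finite subsets of $\mathbb{Z}^d$ and let $i,j$ be adjacent lattice sites such that for each $k$, exactly one of $i,j$ lies in $X_k$. Define $w(X)$ as the minimum cardinality of a set $C$ of nearest-neighbor bonds such that every site of $X$ is an endpoint of some bond in $C$ and $C$ is connected (where two bonds are connected if they share an endpoint or are at distance 1, and a set of bonds is connected if any two bonds are joined by a chain of pairwise-connected bonds in the set). Then $w(X_1 \triangle \cdots \triangle X_n) \le \sum_{k=1}^n w(X_k)$, where $\triangle$ denotes symmetric difference. -/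
open scoped Classical symmDiff

/-- Sites of the lattice `ℤ^d`. -/
abbrev Site (d : ℕ) := Fin d → ℤ

/-- Two sites are adjacent (nearest neighbors) if their Euclidean distance is `1`. -/
def siteAdj {d : ℕ} (a b : Site d) : Prop := (∑ i, (a i - b i) ^ 2) = 1

/-- A (potential) bond is an ordered pair of sites; genuine bonds have adjacent endpoints. -/
abbrev Bond (d : ℕ) := Site d × Site d

def isBond {d : ℕ} (p : Bond d) : Prop := siteAdj p.1 p.2

/-- Two bonds are connected if they share an endpoint or some of their endpoints
are at distance 1. -/
def bondAdj {d : ℕ} (p q : Bond d) : Prop :=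
  p.1 = q.1 ∨ p.1 = q.2 ∨ p.2 = q.1 ∨ p.2 = q.2 ∨
  siteAdj p.1 q.1 ∨ siteAdj p.1 q.2 ∨ siteAdj p.2 q.1 ∨ siteAdj p.2 q.2

/-- A set of bonds is connected if any two of its bonds are joined by a chain of
pairwise-connected bonds inside the set. -/
def connectedIn {d : ℕ} (C : Finset (Bond d)) : Prop :=
  ∀ p ∈ C, ∀ q ∈ C, Relation.ReflTransGen (fun a b => a ∈ C ∧ b ∈ C ∧ bondAdj a b) p q

/-- `C` covers `X`: every site of `X` is an endpoint of some bond of `C`. -/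
def covers {d : ℕ} (C : Finset (Bond d)) (X : Finset (Site d)) : Prop :=
  ∀ x ∈ X, ∃ p ∈ C, x = p.1 ∨ x = p.2

/-- `w(X)`: minimal cardinality of a connected set of bonds covering `X`. -/
noncomputable def w {d : ℕ} (X : Finset (Site d)) : ℕ∞ :=
  sInf {c : ℕ∞ | ∃ C : Finset (Bond d),
    (∀ p ∈ C, isBond p) ∧ connectedIn C ∧ covers C X ∧ (C.card : ℕ∞) = c}

noncomputable instance {d : ℕ} :
    Std.Commutative (fun X Y : Finset (Site d) => X ∆ Y) := ⟨fun _ _ => symmDiff_comm _ _⟩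

noncomputable instance {d : ℕ} :
    Std.Associative (fun X Y : Finset (Site d) => X ∆ Y) := ⟨symmDiff_assoc⟩

/-!
Take optimal connected covers `C k` of the `X k` and let `D` be their union. Every site of the
symmetric difference lies in some `X k`, so `D` covers it, and `|D| ≤ ∑ |C k|`. Each `C k` has
a bond with an endpoint in `{i, j}`; since `i` and `j` are adjacent, any two such bonds are
connected, which links the connected sets `C k` into one connected set.
-/

open Finset

lemma siteAdj_symm {d : ℕ} {a b : Site d} (h : siteAdj a b) : siteAdj b a := by
  unfold siteAdj at *
  rw [← h]
  exact sum_congr rfl fun _ _ => by ring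

lemma bondAdj_of_endpoints {d : ℕ} {a b : Site d} {p q : Bond d} (hab : a = b ∨ siteAdj a b)
    (ha : a = p.1 ∨ a = p.2) (hb : b = q.1 ∨ b = q.2) : bondAdj p q := by
  unfold bondAdj
  rcases hab with rfl | hab <;> rcases ha with rfl | rfl <;> rcases hb with hb | hb <;>
    simp_all

def IsConnectedCover {d : ℕ} (C : Finset (Bond d)) (X : Finset (Site d)) : Prop :=
  (∀ p ∈ C, isBond p) ∧ connectedIn C ∧ covers C X

lemma w_le_card {d : ℕ} {C : Finset (Bond d)} {X : Finset (Site d)}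
    (hC : IsConnectedCover C X) : w X ≤ C.card :=
  sInf_le ⟨C, hC.1, hC.2.1, hC.2.2, rfl⟩

lemma exists_isConnectedCover_card_eq_w {d : ℕ} {X : Finset (Site d)} (hX : w X ≠ ⊤) :
    ∃ C : Finset (Bond d), IsConnectedCover C X ∧ (C.card : ℕ∞) = w X := by
  have hne : {c : ℕ∞ | ∃ C : Finset (Bond d),
      (∀ p ∈ C, isBond p) ∧ connectedIn C ∧ covers C X ∧ (C.card : ℕ∞) = c}.Nonempty := by
    rw [Set.nonempty_iff_ne_empty]
    rintro hempty
    exact hX (by rw [w, hempty, sInf_empty])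
  obtain ⟨C, hbond, hconn, hcov, hcard⟩ := csInf_mem hne
  exact ⟨C, ⟨hbond, hconn, hcov⟩, hcard⟩

lemma w_mono {d : ℕ} {X Y : Finset (Site d)} (hXY : X ⊆ Y) : w X ≤ w Y :=
  sInf_le_sInf fun _ ⟨C, hbond, hconn, hcov, hcard⟩ =>
    ⟨C, hbond, hconn, fun x hx => hcov x (hXY hx), hcard⟩

lemma connectedIn.reflTransGen_of_subset {d : ℕ} {C D : Finset (Bond d)} (hC : connectedIn C)
    (hCD : C ⊆ D) {p q : Bond d} (hp : p ∈ C) (hq : q ∈ C) :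
    Relation.ReflTransGen (fun a b => a ∈ D ∧ b ∈ D ∧ bondAdj a b) p q :=
  Relation.ReflTransGen.mono (fun _ _ ⟨ha, hb, hab⟩ => ⟨hCD ha, hCD hb, hab⟩) _ _ (hC p hp q hq)

lemma connectedIn_biUnion {d : ℕ} {ι : Type*} [Fintype ι] (C : ι → Finset (Bond d))
    (hC : ∀ k, connectedIn (C k)) (b : ι → Bond d) (hb : ∀ k, b k ∈ C k)
    (hadj : ∀ k l, bondAdj (b k) (b l)) : connectedIn (univ.biUnion C) := by
  have hsub : ∀ k, C k ⊆ univ.biUnion C := fun k => subset_biUnion_of_mem C (mem_univ k)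
  intro p hp q hq
  obtain ⟨k, -, hpk⟩ := mem_biUnion.mp hp
  obtain ⟨l, -, hql⟩ := mem_biUnion.mp hq
  exact ((hC k).reflTransGen_of_subset (hsub k) hpk (hb k)).trans <|
    (Relation.ReflTransGen.single ⟨hsub k (hb k), hsub l (hb l), hadj k l⟩).trans <|
      (hC l).reflTransGen_of_subset (hsub l) (hb l) hql

lemma w_biUnion_le_sum {d : ℕ} {ι : Type*} [Fintype ι] (X : ι → Finset (Site d))
    (s : ι → Site d) (hs : ∀ k, s k ∈ X k) (hnear : ∀ k l, s k = s l ∨ siteAdj (s k) (s l)) :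
    w (univ.biUnion X) ≤ ∑ k, w (X k) := by
  by_cases htop : ∃ k, w (X k) = ⊤
  · obtain ⟨k, hk⟩ := htop
    exact le_top.trans_eq (ENat.sum_eq_top.mpr ⟨k, mem_univ k, hk⟩).symm
  push Not at htop
  choose C hC hcard using fun k => exists_isConnectedCover_card_eq_w (htop k)
  choose b hb hsb using fun k => (hC k).2.2 (s k) (hs k)
  have hD : IsConnectedCover (univ.biUnion C) (univ.biUnion X) := by
    refine ⟨fun p hp => ?_, connectedIn_biUnion C (fun k => (hC k).2.1) b hb
      fun k l => bondAdj_of_endpoints (hnear k l) (hsb k) (hsb l), fun x hx => ?_⟩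
    · obtain ⟨k, -, hpk⟩ := mem_biUnion.mp hp
      exact (hC k).1 p hpk
    · obtain ⟨k, -, hxk⟩ := mem_biUnion.mp hx
      obtain ⟨p, hpk, hxp⟩ := (hC k).2.2 x hxk
      exact ⟨p, subset_biUnion_of_mem C (mem_univ k) hpk, hxp⟩
  calc w (univ.biUnion X) ≤ (univ.biUnion C).card := w_le_card hD
    _ ≤ ((∑ k, (C k).card : ℕ) : ℕ∞) := by exact_mod_cast card_biUnion_le
    _ = ∑ k, w (X k) := by push_cast; exact sum_congr rfl fun k _ => hcard k

lemma fold_symmDiff_subset_biUnion {d : ℕ} {ι : Type*} [DecidableEq ι] (s : Finset ι)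
    (X : ι → Finset (Site d)) :
    s.fold (fun A B : Finset (Site d) => A ∆ B) ∅ X ⊆ s.biUnion X := by
  induction s using Finset.induction_on with
  | empty => simp
  | insert a s ha ih =>
    rw [fold_insert ha, biUnion_insert]
    exact symmDiff_le_sup.trans (union_subset_union le_rfl ih)

theorem stmt_0 {d n : ℕ} (X : Fin n → Finset (Site d)) (i j : Site d)
    (hij : siteAdj i j)
    (h : ∀ k, (i ∈ X k ∧ j ∉ X k) ∨ (j ∈ X k ∧ i ∉ X k)) :
    w (Finset.univ.fold (fun A B : Finset (Site d) => A ∆ B) ∅ X) ≤ ∑ k, w (X k) := by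
  let s : Fin n → Site d := fun k => if i ∈ X k then i else j
  have hs : ∀ k, s k ∈ X k := fun k => by
    rcases h k with ⟨hi, -⟩ | ⟨hj, hi⟩ <;> simp_all [s]
  have hnear : ∀ k l, s k = s l ∨ siteAdj (s k) (s l) := fun k l => by
    by_cases hk : i ∈ X k <;> by_cases hl : i ∈ X l <;> simp [s, hk, hl, hij, siteAdj_symm hij]
  exact (w_mono (fold_symmDiff_subset_biUnion univ X)).trans (w_biUnion_le_sum X s hs hnear)
end

section
/- Let $\Lambda = \mathbb{Z}/N\mathbb{Z}$ with $N$ odd, and for $X \subseteq \Lambda$ define $n(X) = \sum_{j:\, \langle j,j+1\rangle \in \partial X} s(j)$ with $s(j) = -1$ for $j=N$ and $+1$ otherwise. Define the generalized translation on subsets by $T X = \{1\} \triangle (X+1)$ (translate by one and toggle site 1). Then $n(X) = 0$ if and only if $X = T^m \emptyset$ for some integer $m$ with $0 \le m \le 2N-1$; equivalently, $n(X)=0$ iff $X$ is the empty set, all of $\Lambda$, an initial interval $\{1,\dots,s\}$, or a terminal interval $\{s+1,\dots,N\}$. -/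
open scoped Classical symmDiff

def sgn (N : ℕ) (j : ZMod N) : ℤ := if j = 0 then -1 else 1

def bdry (N : ℕ) (X : Finset (ZMod N)) (j : ZMod N) : Prop :=
  (j ∈ X ∧ j + 1 ∉ X) ∨ (j + 1 ∈ X ∧ j ∉ X)

noncomputable def nOf (N : ℕ) [NeZero N] (X : Finset (ZMod N)) : ℤ :=
  ∑ j ∈ Finset.univ.filter (fun j : ZMod N => bdry N X j), sgn N j

/-- The generalized translation `T X = {1} ∆ (X + 1)`. -/
noncomputable def T (N : ℕ) (X : Finset (ZMod N)) : Finset (ZMod N) :=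
  ({1} : Finset (ZMod N)) ∆ (X.image (· + 1))

/-!
The weight `sgn` is `+1` on every bond except `⟨N, 1⟩` (site `N` is `0 : ZMod N`), so
`n(X) = #(∂X \ {⟨N, 1⟩}) - [⟨N, 1⟩ ∈ ∂X]`, and `n(X) = 0` leaves at most one boundary bond
`⟨b, b + 1⟩` besides `⟨N, 1⟩`. Membership in `X` is then constant on `{1, …, b}` and on
`{b + 1, …, N}`, so `X` is `{1, …, m}` or its complement for some `m < N`; conversely these sets
have `n = 0`. They are exactly the orbit of `∅` under `T`: the first `N` steps grow `{1, …, m}`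
up to `Λ`, and since `T` commutes with complementation the next `N` steps run through the
complements.
-/

open Finset

namespace ZMod

variable {N : ℕ} [NeZero N]

lemma val_add_one_eq_ite (i : ZMod N) :
    (i + 1).val = if i.val + 1 = N then 0 else i.val + 1 := by
  have hlt := i.val_lt
  rw [val_add, val_one_eq_one_mod, Nat.add_mod_mod]
  split_ifs with h
  · rw [h, Nat.mod_self]
  · exact Nat.mod_eq_of_lt (by omega)

lemma eq_natCast_iff_val_eq {m : ℕ} (hm : m < N) (j : ZMod N) : j = m ↔ j.val = m :=
  ⟨fun h => h ▸ val_natCast_of_lt hm, fun h => h ▸ (natCast_zmod_val j).symm⟩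

end ZMod

lemma Nat.iff_of_forall_iff_succ {p : ℕ → Prop} {a c : ℕ}
    (h : ∀ k, a ≤ k → k < c → (p k ↔ p (k + 1))) {k : ℕ} (hak : a ≤ k) (hkc : k ≤ c) :
    p k ↔ p a := by
  induction k, hak using Nat.le_induction with
  | base => rfl
  | succ k hak ih => rw [← h k hak (by omega), ih (by omega)]

variable {N : ℕ}

noncomputable def initialInterval (N : ℕ) [NeZero N] (m : ℕ) : Finset (ZMod N) :=
  univ.filter fun j => j.val ∈ Icc 1 m

def IsInitialOrFinalInterval (N : ℕ) [NeZero N] (X : Finset (ZMod N)) : Prop :=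
  ∃ m < N, X = initialInterval N m ∨ X = (initialInterval N m)ᶜ

section Translation

lemma mem_T_add_one {X : Finset (ZMod N)} {i : ZMod N} : i + 1 ∈ T N X ↔ (i ∈ X ↔ i ≠ 0) := by
  simp only [T, mem_symmDiff, mem_singleton, add_eq_right, mem_image, add_left_inj,
    exists_eq_right]
  tauto

lemma Finset.ext_add_one {G : Type*} [AddGroup G] [One G] {X Y : Finset G}
    (h : ∀ i, i + 1 ∈ X ↔ i + 1 ∈ Y) : X = Y :=
  ext fun j => by simpa using h (j - 1)

variable [NeZero N]

lemma T_compl (X : Finset (ZMod N)) : T N Xᶜ = (T N X)ᶜ :=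
  Finset.ext_add_one fun i => by simp only [mem_T_add_one, mem_compl]; tauto

lemma mem_initialInterval {m : ℕ} {j : ZMod N} :
    j ∈ initialInterval N m ↔ 1 ≤ j.val ∧ j.val ≤ m := by
  simp [initialInterval]

lemma initialInterval_zero : initialInterval N 0 = ∅ := by
  ext j; simp only [mem_initialInterval, notMem_empty, iff_false]; omega

lemma T_initialInterval {m : ℕ} (hm : m + 1 < N) :
    T N (initialInterval N m) = initialInterval N (m + 1) :=
  Finset.ext_add_one fun i => by
    rw [mem_T_add_one, mem_initialInterval, mem_initialInterval, ZMod.val_add_one_eq_ite,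
      Ne, ← ZMod.val_eq_zero]
    split_ifs <;> omega

lemma T_initialInterval_pred : T N (initialInterval N (N - 1)) = univ :=
  Finset.ext_add_one fun i => by
    have := i.val_lt
    rw [mem_T_add_one, mem_initialInterval, Ne, ← ZMod.val_eq_zero]
    simp only [mem_univ, iff_true]
    omega

lemma iterate_T_empty {m : ℕ} (hm : m < N) : (T N)^[m] ∅ = initialInterval N m := by
  induction m with
  | zero => exact initialInterval_zero.symm
  | succ m ih => rw [Function.iterate_succ_apply', ih (by omega), T_initialInterval hm]

lemma iterate_T_empty_self : (T N)^[N] ∅ = univ := by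
  obtain ⟨n, rfl⟩ := Nat.exists_eq_succ_of_ne_zero (NeZero.ne N)
  rw [Function.iterate_succ_apply', iterate_T_empty n.lt_succ_self]
  exact T_initialInterval_pred

lemma iterate_T_empty_add {m : ℕ} (hm : m < N) :
    (T N)^[N + m] ∅ = (initialInterval N m)ᶜ := by
  rw [add_comm, Function.iterate_add_apply, iterate_T_empty_self, ← compl_empty,
    (Function.Commute.iterate_left T_compl m) ∅, iterate_T_empty hm]

lemma exists_iterate_T_empty_iff (X : Finset (ZMod N)) :
    (∃ m : ℕ, m ≤ 2 * N - 1 ∧ X = (T N)^[m] ∅) ↔ IsInitialOrFinalInterval N X := by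
  have hN := NeZero.pos N
  constructor
  · rintro ⟨m, hm, rfl⟩
    rcases lt_or_ge m N with hmN | hmN
    · exact ⟨m, hmN, .inl (iterate_T_empty hmN)⟩
    · obtain ⟨k, rfl⟩ := Nat.exists_eq_add_of_le hmN
      exact ⟨k, by omega, .inr (iterate_T_empty_add (by omega))⟩
  · rintro ⟨m, hm, rfl | rfl⟩
    · exact ⟨m, by omega, (iterate_T_empty hm).symm⟩
    · exact ⟨N + m, by omega, (iterate_T_empty_add hm).symm⟩

end Translation

section BoundarySign

lemma not_bdry_iff {X : Finset (ZMod N)} {j : ZMod N} : ¬ bdry N X j ↔ (j ∈ X ↔ j + 1 ∈ X) := by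
  unfold bdry; tauto

variable [NeZero N]

lemma bdry_compl (X : Finset (ZMod N)) : bdry N Xᶜ = bdry N X := by
  ext j; simp only [bdry, mem_compl]; tauto

lemma nOf_compl (X : Finset (ZMod N)) : nOf N Xᶜ = nOf N X := by
  simp only [nOf, bdry_compl]

lemma bdry_initialInterval {m : ℕ} (hm : 0 < m) (hmN : m < N) (j : ZMod N) :
    bdry N (initialInterval N m) j ↔ j = 0 ∨ j = m := by
  rw [bdry, mem_initialInterval, mem_initialInterval, ZMod.val_add_one_eq_ite,
    ZMod.eq_natCast_iff_val_eq hmN, ← ZMod.val_eq_zero]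
  have := j.val_lt
  split_ifs <;> omega

lemma nOf_initialInterval {m : ℕ} (hmN : m < N) : nOf N (initialInterval N m) = 0 := by
  rcases Nat.eq_zero_or_pos m with rfl | hm
  · simp [nOf, initialInterval_zero, bdry]
  have hm0 : (m : ZMod N) ≠ 0 := fun h => by
    simpa [ZMod.val_natCast_of_lt hmN, hm.ne'] using congrArg ZMod.val h
  have hB : univ.filter (bdry N (initialInterval N m)) = {0, (m : ZMod N)} := by
    ext j; simp [bdry_initialInterval hm hmN]
  rw [nOf, hB, sum_pair hm0.symm, sgn, sgn, if_pos rfl, if_neg hm0]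
  norm_num

lemma nOf_eq_zero_of_isInitialOrFinalInterval {X : Finset (ZMod N)}
    (hX : IsInitialOrFinalInterval N X) : nOf N X = 0 := by
  obtain ⟨m, hm, rfl | rfl⟩ := hX
  · exact nOf_initialInterval hm
  · rw [nOf_compl, nOf_initialInterval hm]

lemma nOf_eq_card_erase_sub (X : Finset (ZMod N)) :
    nOf N X = #((univ.filter (bdry N X)).erase 0) - if bdry N X 0 then 1 else 0 := by
  have hsgn : ∀ j ∈ (univ.filter (bdry N X)).erase 0, sgn N j = 1 := fun j hj =>
    if_neg (ne_of_mem_erase hj)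
  unfold nOf
  split_ifs with h0
  · rw [← sum_erase_add _ _ (mem_filter.2 ⟨mem_univ _, h0⟩), sum_congr rfl hsgn, sgn, if_pos rfl]
    simp [sub_eq_add_neg]
  · rw [← erase_eq_of_notMem (s := univ.filter (bdry N X)) (by simpa using h0), sum_congr rfl hsgn]
    simp

lemma exists_bdry_subset_of_nOf_eq_zero {X : Finset (ZMod N)} (hX : nOf N X = 0) :
    ∃ b, ∀ j, bdry N X j → j = 0 ∨ j = b := by
  have hcard : #((univ.filter (bdry N X)).erase 0) ≤ 1 := by
    rw [nOf_eq_card_erase_sub] at hX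
    split_ifs at hX <;> omega
  obtain ⟨b, hb⟩ := card_le_one_iff_subset_singleton.1 hcard
  refine ⟨b, fun j hj => or_iff_not_imp_left.2 fun hj0 => ?_⟩
  simpa using hb (mem_erase.2 ⟨hj0, mem_filter.2 ⟨mem_univ _, hj⟩⟩)

end BoundarySign

section Classification

variable [NeZero N]

lemma mem_iff_of_bdry_subset {X : Finset (ZMod N)} {b : ZMod N}
    (hb : ∀ j, bdry N X j → j = 0 ∨ j = b) (j : ZMod N) :
    j ∈ X ↔ if j ∈ initialInterval N b.val then 1 ∈ X else 0 ∈ X := by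
  set p : ℕ → Prop := fun k => (k : ZMod N) ∈ X
  have step : ∀ k, 0 < k → k < N → k ≠ b.val → (p k ↔ p (k + 1)) := by
    intro k hk hkN hkb
    have hk' : ¬ bdry N X k := fun h => by
      rcases hb _ h with h | h
      · simpa [ZMod.val_natCast_of_lt hkN, hk.ne'] using congrArg ZMod.val h
      · exact hkb (by rw [← h, ZMod.val_natCast_of_lt hkN])
    simpa [p] using not_bdry_iff.1 hk'
  have hj : j ∈ X ↔ p j.val := by simp [p]
  have := j.val_lt
  have := b.val_lt
  rw [hj]
  split_ifs with h
  all_goals rw [mem_initialInterval] at h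
  · simpa [p] using Nat.iff_of_forall_iff_succ (fun k hk hkb => step k hk (by omega) hkb.ne) h.1 h.2
  · rcases Nat.eq_zero_or_pos j.val with h0 | h0
    · simp [p, h0]
    · have chain : ∀ {k}, b.val + 1 ≤ k → k ≤ N → (p k ↔ p (b.val + 1)) :=
        Nat.iff_of_forall_iff_succ fun k hk hkN => step k (by omega) hkN (by omega)
      rw [chain (by omega) (by omega), ← chain (by omega) le_rfl]
      simp [p]

lemma isInitialOrFinalInterval_of_bdry_subset {X : Finset (ZMod N)} {b : ZMod N}
    (hb : ∀ j, bdry N X j → j = 0 ∨ j = b) : IsInitialOrFinalInterval N X := by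
  have hX := mem_iff_of_bdry_subset hb
  have hN := NeZero.pos N
  by_cases h1 : (1 : ZMod N) ∈ X <;> by_cases h0 : (0 : ZMod N) ∈ X
  · exact ⟨0, hN, .inr (ext fun j => by rw [hX]; simp [h1, h0, initialInterval_zero])⟩
  · exact ⟨b.val, b.val_lt, .inl (ext fun j => by rw [hX]; simp [h1, h0])⟩
  · exact ⟨b.val, b.val_lt, .inr (ext fun j => by rw [hX]; simp [h1, h0])⟩
  · exact ⟨0, hN, .inl (ext fun j => by rw [hX]; simp [h1, h0, initialInterval_zero])⟩

lemma nOf_eq_zero_iff (X : Finset (ZMod N)) : nOf N X = 0 ↔ IsInitialOrFinalInterval N X :=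
  ⟨fun hX => (exists_bdry_subset_of_nOf_eq_zero hX).elim
    fun _ hb => isInitialOrFinalInterval_of_bdry_subset hb,
    nOf_eq_zero_of_isInitialOrFinalInterval⟩

end Classification

theorem stmt_3_general (N : ℕ) [NeZero N] (X : Finset (ZMod N)) :
    nOf N X = 0 ↔ ∃ m : ℕ, m ≤ 2 * N - 1 ∧ X = (T N)^[m] ∅ := by
  rw [nOf_eq_zero_iff, exists_iterate_T_empty_iff]

theorem stmt_3 (N : ℕ) [NeZero N] (hN : Odd N) (X : Finset (ZMod N)) :
    nOf N X = 0 ↔ ∃ m : ℕ, m ≤ 2 * N - 1 ∧ X = (T N)^[m] ∅ :=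
  stmt_3_general N X
end

section
/- With $\Lambda = \mathbb{Z}/N\mathbb{Z}$, $N$ odd, and $T X = \{1\} \triangle (X+1)$ acting on subsets of $\Lambda$, the map $T$ satisfies $T^N X = \Lambda \triangle X$ (i.e., $T^N$ is complementation), and hence $T^{2N} X = X$ for all $X \subseteq \Lambda$. -/
open scoped Classical symmDiff

lemma T_iter (N : ℕ) [NeZero N] (X : Finset (ZMod N)) :
    ∀ k, k ≤ N → (T N)^[k] X =
      ((Finset.range k).image (fun i : ℕ => (i : ZMod N) + 1)) ∆
        (X.image (fun x => x + (k : ℕ))) := by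
  intro k
  induction k with
  | zero =>
    intro _
    simp [symmDiff_def]
  | succ k ih =>
    intro hk
    have hinj : Function.Injective (fun x : ZMod N => x + 1) := add_left_injective 1
    rw [Function.iterate_succ_apply', ih (le_of_lt (Nat.lt_of_succ_le hk)), T,
      Finset.image_symmDiff _ _ hinj, ← symmDiff_assoc, Finset.image_image]
    congr 1
    · ext a
      simp only [Finset.mem_symmDiff, Finset.mem_image, Finset.mem_singleton, Finset.mem_range,
        Function.comp]
      constructor
      · rintro (⟨rfl, _⟩ | ⟨⟨i, hi, rfl⟩, _⟩)
        · exact ⟨0, Nat.succ_pos k, by simp⟩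
        · exact ⟨i + 1, Nat.succ_lt_succ hi, by push_cast; ring⟩
      · rintro ⟨i, hi, rfl⟩
        have key : ∀ j : ℕ, j + 1 < N → ¬ ((j : ZMod N) + 1 + 1 = 1) := by
          intro j hj he
          have h0 : ((j + 1 : ℕ) : ZMod N) = 0 := by push_cast; linear_combination he
          rw [ZMod.natCast_eq_zero_iff] at h0
          have := Nat.le_of_dvd (Nat.succ_pos j) h0
          omega
        rcases i with _ | j
        · left
          refine ⟨by simp, ?_⟩
          rintro ⟨j, hj, he⟩
          exact key j (by omega) (by rw [he]; simp)
        · right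
          have hj : j + 1 < N := by omega
          refine ⟨⟨j, by omega, by push_cast; ring⟩, ?_⟩
          intro he
          exact key j hj (by push_cast at he ⊢; linear_combination he)
    · ext a
      simp only [Finset.mem_image]
      constructor
      · rintro ⟨b, ⟨c, hc, rfl⟩, rfl⟩
        exact ⟨c, hc, by push_cast; ring⟩
      · rintro ⟨c, hc, rfl⟩
        exact ⟨c + k, ⟨c, hc, rfl⟩, by push_cast; ring⟩

theorem stmt_4 (N : ℕ) [NeZero N] (hN : Odd N) (X : Finset (ZMod N)) :
    (T N)^[N] X = (Finset.univ : Finset (ZMod N)) ∆ X ∧ (T N)^[2 * N] X = X := by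
  have hmain : ∀ Y : Finset (ZMod N),
      (T N)^[N] Y = (Finset.univ : Finset (ZMod N)) ∆ Y := by
    intro Y
    rw [T_iter N Y N le_rfl]
    congr 1
    · ext a
      simp only [Finset.mem_image, Finset.mem_range, Finset.mem_univ, iff_true]
      refine ⟨(a - 1).val, ZMod.val_lt _, ?_⟩
      rw [ZMod.natCast_val, ZMod.cast_id]
      ring
    · ext a
      simp [ZMod.natCast_self]
  refine ⟨hmain X, ?_⟩
  rw [two_mul, Function.iterate_add_apply, hmain, hmain, symmDiff_symmDiff_cancel_left]
end

section
/- In the setting of the interface move distance $\alpha$ on subsets of $\Lambda = \mathbb{Z}/N\mathbb{Z}$ ($N$ odd), the generalized translation $T$ (with $TX = \{1\}\triangle(X+1)$) preserves $\alpha$: for all $X, Y \subseteq \Lambda$ and all integers $s$, $\alpha(T^s X \to T^s Y) = \alpha(X \to Y)$. -/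
open scoped Classical symmDiff

/-- `j :: X` (`j` is an interface site of `X`): for `j ≠ N` this means `j : X`;
for `j = N` (i.e. `j = 0` in `ZMod N`) it means both or neither of `N, 1` lie in `X`. -/
def dbdry (N : ℕ) (X : Finset (ZMod N)) (j : ZMod N) : Prop :=
  if j = 0 then ¬ bdry N X j else bdry N X j

/-- An interface move: replace `X` by `X ∆ {j, j+1}` for an interface site `j` of `X`. -/
def move (N : ℕ) (X Y : Finset (ZMod N)) : Prop :=
  ∃ j : ZMod N, dbdry N X j ∧ Y = X ∆ ({j, j + 1} : Finset (ZMod N))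

/-- `α(X → Y)`: the minimal number of interface moves carrying `X` to `Y`
(`⊤` if no such sequence of moves exists). -/
noncomputable def alpha (N : ℕ) (X Y : Finset (ZMod N)) : ℕ∞ :=
  sInf {c : ℕ∞ | ∃ n : ℕ, c = (n : ℕ∞) ∧ ∃ f : ℕ → Finset (ZMod N),
    f 0 = X ∧ f n = Y ∧ ∀ k < n, move N (f k) (f (k + 1))}

/-!
`T` is a bijection of `Finset (ZMod N)` that conjugates a move at site `j` into a move at
site `j + 1`: translating by one moves the twisted bond `⟨N, 1⟩` to `⟨1, 2⟩`, and toggling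
site `1` afterwards flips the parity of exactly the bonds `⟨0, 1⟩` and `⟨1, 2⟩`, which puts
the twist back at `⟨N, 1⟩`. Hence `T` and its inverse map move sequences to move sequences
of the same length, and `α` is `T`-invariant.
-/

namespace GeneralizedTranslation

variable {N : ℕ}

noncomputable def Tinv (N : ℕ) (X : Finset (ZMod N)) : Finset (ZMod N) :=
  (X ∆ {1}).image (· - 1)

lemma leftInverse_Tinv_T : Function.LeftInverse (Tinv N) (T N) := fun X => by
  rw [Tinv, T, symmDiff_comm, symmDiff_symmDiff_cancel_left, Finset.image_image]
  simp [Function.comp_def]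

lemma rightInverse_Tinv_T : Function.RightInverse (Tinv N) (T N) := fun X => by
  rw [Tinv, T, Finset.image_image]
  simp [Function.comp_def, symmDiff_comm X, symmDiff_symmDiff_cancel_left]

lemma mem_T {X : Finset (ZMod N)} {k : ZMod N} :
    k ∈ T N X ↔ ¬(k = 1 ↔ k - 1 ∈ X) := by
  have mem_image : k ∈ X.image (· + 1) ↔ k - 1 ∈ X := by
    rw [Finset.mem_image]
    exact ⟨by rintro ⟨a, ha, rfl⟩; simpa using ha, fun h => ⟨k - 1, h, sub_add_cancel k 1⟩⟩
  rw [T, Finset.mem_symmDiff, Finset.mem_singleton, mem_image]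
  tauto

lemma dbdry_T_add_one (X : Finset (ZMod N)) (j : ZMod N) :
    dbdry N (T N X) (j + 1) ↔ dbdry N X j := by
  have h₁ : ((j + 1 : ZMod N) = 1) ↔ j = 0 := add_eq_right
  have h₂ : ((j + 1 + 1 : ZMod N) = 1) ↔ j + 1 = 0 := add_eq_right
  unfold dbdry bdry
  rw [mem_T, mem_T, add_sub_cancel_right, add_sub_cancel_right, h₁, h₂]
  rcases eq_or_ne j 0 with rfl | hj
  · by_cases h₀ : (1 : ZMod N) = 0
    · simp [h₀]
    · simp [h₀]; tauto
  · by_cases hj₁ : (j + 1 : ZMod N) = 0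
    · simp [hj, hj₁]; tauto
    · simp [hj, hj₁]

lemma T_symmDiff (X S : Finset (ZMod N)) :
    T N (X ∆ S) = T N X ∆ S.image (· + 1) := by
  rw [T, T, Finset.image_symmDiff _ _ (add_left_injective 1), symmDiff_assoc]

lemma T_symmDiff_pair (X : Finset (ZMod N)) (j : ZMod N) :
    T N (X ∆ {j, j + 1}) = T N X ∆ {j + 1, j + 1 + 1} := by
  rw [T_symmDiff, Finset.image_insert, Finset.image_singleton]

lemma move_T_iff {X Y : Finset (ZMod N)} : move N (T N X) (T N Y) ↔ move N X Y := by
  constructor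
  · rintro ⟨j, hj, hY⟩
    refine ⟨j - 1, ?_, leftInverse_Tinv_T.injective ?_⟩
    · exact (dbdry_T_add_one X (j - 1)).1 (by rwa [sub_add_cancel])
    · rw [hY, T_symmDiff_pair, sub_add_cancel]
  · rintro ⟨j, hj, rfl⟩
    exact ⟨j + 1, (dbdry_T_add_one X j).2 hj, T_symmDiff_pair X j⟩

lemma move_Tinv {X Y : Finset (ZMod N)} (h : move N X Y) : move N (Tinv N X) (Tinv N Y) := by
  rwa [← move_T_iff, rightInverse_Tinv_T, rightInverse_Tinv_T]

end GeneralizedTranslation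

lemma alpha_map_le {N : ℕ} (g : Finset (ZMod N) → Finset (ZMod N))
    (hg : ∀ ⦃X Y⦄, move N X Y → move N (g X) (g Y)) (X Y : Finset (ZMod N)) :
    alpha N (g X) (g Y) ≤ alpha N X Y := by
  refine sInf_le_sInf ?_
  rintro c ⟨n, rfl, f, rfl, rfl, hf⟩
  exact ⟨n, rfl, g ∘ f, rfl, rfl, fun k hk => hg (hf k hk)⟩

open GeneralizedTranslation in
lemma alpha_T {N : ℕ} (X Y : Finset (ZMod N)) : alpha N (T N X) (T N Y) = alpha N X Y := by
  refine le_antisymm (alpha_map_le _ (fun _ _ => move_T_iff.2) X Y) ?_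
  calc alpha N X Y = alpha N (Tinv N (T N X)) (Tinv N (T N Y)) := by
        rw [leftInverse_Tinv_T, leftInverse_Tinv_T]
    _ ≤ alpha N (T N X) (T N Y) := alpha_map_le _ (fun _ _ => move_Tinv) _ _

theorem stmt_15_general (N : ℕ) (X Y : Finset (ZMod N)) (s : ℕ) :
    alpha N ((T N)^[s] X) ((T N)^[s] Y) = alpha N X Y := by
  induction s with
  | zero => rfl
  | succ n ih => rw [Function.iterate_succ_apply', Function.iterate_succ_apply', alpha_T, ih]

theorem stmt_15 (N : ℕ) [NeZero N] (hN : Odd N) (X Y : Finset (ZMod N)) (s : ℕ) :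
    alpha N ((T N)^[s] X) ((T N)^[s] Y) = alpha N X Y :=
  stmt_15_general N X Y s
end
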